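/- Let (W,S) be a Coxeter group, let s, t ∈ S be distinct with m_{s,t} < ∞, and let I = {s,t}. Let q ∈ W, and let w be the unique minimal-length element of the coset W_I q⁻¹, where W_I is the parabolic subgroup generated by I. If u ∈ S satisfies u ∈ q W_I q⁻¹, then wuw⁻¹ ∈ I. -/

import Mathlib

/-!
Conjugating `q⁻¹ s_u q ∈ W_I` by `w q ∈ W_I` shows `v = w s_u w⁻¹ ∈ W_I`. Since `w` is the
shortest element of `W_I w`, lengths add along this coset, so `ℓ v + ℓ w = ℓ (w s_u) ≤ ℓ w + 1`;
as `v ≠ 1`, `v` has length one, hence is a simple reflection lying in `W_I`, i.e. in `I`.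

Both length additivity and the last step rest on the deletion property: every word has a reduced
subword with the same product. It follows from the exchange property, which comes from Tits'
action of `W` on `W × ZMod 2`: the parity of the number of occurrences of a given element in the
left inversion sequence of a word depends only on the product of the word.
-/

open List

namespace CoxeterSystem

def reflectionPerm {G : Type*} [Group G] [DecidableEq G] (g : G) : Equiv.Perm (G × ZMod 2) :=
  (MulAut.conj g).toEquiv.prodShear fun t => Equiv.addRight (if t = g then 1 else 0)

@[simp]
lemma reflectionPerm_apply {G : Type*} [Group G] [DecidableEq G] (g t : G) (ε : ZMod 2) :
    reflectionPerm g (t, ε) = (g * t * g⁻¹, ε + if t = g then 1 else 0) :=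
  rfl

variable {B W : Type*} [Group W] {M : CoxeterMatrix B} (cs : CoxeterSystem M W)

local prefix:100 "s" => cs.simple
local prefix:100 "π" => cs.wordProd
local prefix:100 "ℓ" => cs.length
local prefix:100 "lis" => cs.leftInvSeq

theorem leftInvSeq_alternatingWord (i j : B) (p : ℕ) :
    lis (alternatingWord i j (2 * p)) =
      (range (2 * p)).map fun k => π (alternatingWord j i (2 * k + 1)) :=
  ext_getElem (by simp) fun k hk _ => by
    simpa using cs.getElem_leftInvSeq_alternatingWord i j p k (by simpa using hk)

theorem wordProd_alternatingWord_odd (i j : B) (k : ℕ) :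
    π (alternatingWord j i (2 * k + 1)) = s i * (s j * s i) ^ k := by
  rw [prod_alternatingWord_eq_mul_pow]
  simp [Nat.add_div_of_dvd_right]

section ReflectionRepresentation

variable [DecidableEq W]

theorem prod_map_reflectionPerm_apply (ω : List B) (t : W) (ε : ZMod 2) :
    (ω.map fun i => reflectionPerm (s i)).prod (t, ε) =
      (π ω * t * (π ω)⁻¹, ε + (lis ω).count (π ω * t * (π ω)⁻¹)) := by
  induction ω with
  | nil => simp [leftInvSeq]
  | cons i ω ih =>
    set x := π ω * t * (π ω)⁻¹
    have hconj : π (i :: ω) * t * (π (i :: ω))⁻¹ = MulAut.conj (s i) x := by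
      simp only [x, wordProd_cons, MulAut.conj_apply]
      group
    have hx : s i = s i * x * (s i)⁻¹ ↔ x = s i := by
      rw [eq_comm, mul_inv_eq_iff_eq_mul, mul_right_inj]
    rw [map_cons, prod_cons, Equiv.Perm.mul_apply, ih, reflectionPerm_apply, hconj, leftInvSeq,
      count_cons, count_map_of_injective _ _ (MulAut.conj (s i)).injective]
    simp only [beq_iff_eq, hx, MulAut.conj_apply, Nat.cast_add, add_assoc]
    split_ifs <;> simp

theorem prod_map_reflectionPerm_alternatingWord (i j : B) (m : ℕ) :
    ((alternatingWord i j (2 * m)).map fun k => reflectionPerm (s k)).prod =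
      (reflectionPerm (s i) * reflectionPerm (s j)) ^ m := by
  induction m with
  | zero => simp [alternatingWord]
  | succ m ih =>
    rw [show 2 * (m + 1) = 2 * m + 1 + 1 by ring, alternatingWord_succ', alternatingWord_succ']
    simp [ih, pow_succ', mul_assoc]

theorem cast_count_leftInvSeq_alternatingWord_eq_zero (i j : B) (t : W) :
    ((lis (alternatingWord i j (2 * M i j))).count t : ZMod 2) = 0 := by
  -- the sequence runs twice through the same `M i j` reflections
  have hper : (fun k => π (alternatingWord j i (2 * (M i j + k) + 1))) =
      fun k => π (alternatingWord j i (2 * k + 1)) := by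
    funext k
    simp [wordProd_alternatingWord_odd, pow_add]
  rw [leftInvSeq_alternatingWord, two_mul, range_add, map_append, map_map, Function.comp_def,
    hper, count_append, Nat.cast_add, CharTwo.add_self_eq_zero]

theorem isLiftable_reflectionPerm : M.IsLiftable fun i => reflectionPerm (s i) := by
  intro i j
  ext ⟨t, ε⟩ : 1
  have hπ : π (alternatingWord i j (2 * M i j)) = 1 := by
    simp [prod_alternatingWord_eq_mul_pow]
  rw [← prod_map_reflectionPerm_alternatingWord, prod_map_reflectionPerm_apply, hπ,
    cast_count_leftInvSeq_alternatingWord_eq_zero]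
  simp

theorem cast_count_leftInvSeq_eq_of_wordProd_eq {ω ω' : List B} (h : π ω = π ω') (t : W) :
    ((lis ω).count t : ZMod 2) = (lis ω').count t := by
  let φ := cs.lift ⟨_, cs.isLiftable_reflectionPerm⟩
  have hφ : ∀ ω, φ (π ω) = (ω.map fun i => reflectionPerm (s i)).prod := fun ω => by
    simp [φ, wordProd, map_list_prod, Function.comp_def]
  have := congrArg (fun g => (φ g ((π ω)⁻¹ * t * π ω, 0)).2) h
  simp only [hφ] at this
  rw [prod_map_reflectionPerm_apply, prod_map_reflectionPerm_apply, ← h] at this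
  simpa [mul_assoc] using this

end ReflectionRepresentation

theorem simple_mem_leftInvSeq_of_isLeftDescent {ω : List B} {i : B}
    (hi : cs.IsLeftDescent (π ω) i) : s i ∈ lis ω := by
  classical
  obtain ⟨σ, hσred, hσ⟩ := cs.exists_isReduced (s i * π ω)
  have hπ : π (i :: σ) = π ω := by
    rw [wordProd_cons, ← hσ, ← mul_assoc, simple_mul_simple_self, one_mul]
  have hred : cs.IsReduced (i :: σ) := by
    have := cs.isLeftDescent_iff.mp hi
    rw [IsReduced, hπ, ← this, length_cons, hσ, hσred]
  have hcount : (lis (i :: σ)).count (s i) = 1 :=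
    count_eq_one_of_mem hred.nodup_leftInvSeq (by simp [leftInvSeq])
  have hparity := cs.cast_count_leftInvSeq_eq_of_wordProd_eq hπ (s i)
  rw [hcount, Nat.cast_one] at hparity
  refine count_pos_iff.mp (Nat.pos_of_ne_zero fun h => ?_)
  simp [h] at hparity

theorem exists_eraseIdx_of_isLeftDescent {ω : List B} {i : B}
    (hi : cs.IsLeftDescent (π ω) i) : ∃ n < ω.length, s i * π ω = π (ω.eraseIdx n) := by
  obtain ⟨n, hn, hget⟩ := mem_iff_getElem.mp (cs.simple_mem_leftInvSeq_of_isLeftDescent hi)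
  refine ⟨n, by simpa using hn, ?_⟩
  rw [← cs.getD_leftInvSeq_mul_wordProd, getD_eq_getElem _ _ hn, hget]

theorem exists_isReduced_sublist (ω : List B) :
    ∃ ω', ω' <+ ω ∧ cs.IsReduced ω' ∧ π ω' = π ω := by
  induction ω with
  | nil => exact ⟨[], .slnil, by simp [IsReduced], rfl⟩
  | cons i ω ih =>
    obtain ⟨ω', hsub, hred, hπ⟩ := ih
    by_cases hi : cs.IsLeftDescent (π ω') i
    · obtain ⟨n, hn, he⟩ := cs.exists_eraseIdx_of_isLeftDescent hi
      refine ⟨ω'.eraseIdx n, ((eraseIdx_sublist _ _).trans hsub).cons i, ?_, ?_⟩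
      · have h₁ := cs.isLeftDescent_iff.mp hi
        have h₂ := length_eraseIdx_add_one hn
        have h₃ := hred.eq
        rw [IsReduced, ← he]
        omega
      · rw [← he, wordProd_cons, hπ]
    · refine ⟨i :: ω', hsub.cons_cons i, ?_, by rw [wordProd_cons, wordProd_cons, hπ]⟩
      rw [IsReduced, wordProd_cons, cs.not_isLeftDescent_iff.mp hi, hred, length_cons]

section Parabolic

variable {I : Set B}

theorem wordProd_mem_closure {ω : List B} (hω : ∀ i ∈ ω, i ∈ I) :
    π ω ∈ Subgroup.closure (cs.simple '' I) :=
  Subgroup.list_prod_mem _ fun _ hx => by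
    obtain ⟨i, hi, rfl⟩ := mem_map.mp hx
    exact Subgroup.subset_closure (Set.mem_image_of_mem _ (hω i hi))

theorem exists_wordProd_eq_of_mem_closure {p : W} (hp : p ∈ Subgroup.closure (cs.simple '' I)) :
    ∃ ω : List B, (∀ i ∈ ω, i ∈ I) ∧ π ω = p := by
  induction hp using Subgroup.closure_induction with
  | mem _ hx =>
    obtain ⟨i, hi, rfl⟩ := hx
    exact ⟨[i], by simpa using hi, wordProd_singleton cs i⟩
  | one => exact ⟨[], by simp, rfl⟩
  | mul _ _ _ _ hx hy =>
    obtain ⟨ω₁, h₁, rfl⟩ := hx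
    obtain ⟨ω₂, h₂, rfl⟩ := hy
    exact ⟨ω₁ ++ ω₂, by simpa using fun i hi => hi.elim (h₁ i) (h₂ i), wordProd_append ..⟩
  | inv _ _ hx =>
    obtain ⟨ω, h, rfl⟩ := hx
    exact ⟨ω.reverse, by simpa using h, wordProd_reverse ..⟩

theorem mem_image_simple_of_mem_closure_of_length_eq_one {p : W}
    (hp : p ∈ Subgroup.closure (cs.simple '' I)) (h : ℓ p = 1) : p ∈ cs.simple '' I := by
  obtain ⟨ω, hωI, rfl⟩ := cs.exists_wordProd_eq_of_mem_closure hp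
  obtain ⟨ω', hsub, hred, hπ⟩ := cs.exists_isReduced_sublist ω
  obtain ⟨i, rfl⟩ := List.length_eq_one_iff.mp (hred.symm.trans (hπ ▸ h))
  exact ⟨i, hωI i (hsub.subset (mem_singleton_self i)), by rw [← hπ, wordProd_singleton]⟩

theorem length_mul_eq_add_of_minimal {w : W}
    (hw : ∀ p ∈ Subgroup.closure (cs.simple '' I), ℓ w ≤ ℓ (p * w)) {p : W}
    (hp : p ∈ Subgroup.closure (cs.simple '' I)) : ℓ (p * w) = ℓ p + ℓ w := by
  obtain ⟨ω, hωI, rfl⟩ := cs.exists_wordProd_eq_of_mem_closure hp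
  obtain ⟨δ, hδ, rfl⟩ := cs.exists_isReduced w
  obtain ⟨χ, hsub, hχ, hπ⟩ := cs.exists_isReduced_sublist (ω ++ δ)
  obtain ⟨ω₁, δ₁, rfl, hω₁, hδ₁⟩ := sublist_append_iff.mp hsub
  -- minimality of `w` forces the reduced subword to keep all of `δ`
  have hδ₁π : π δ₁ = ((π ω₁)⁻¹ * π ω) * π δ := by
    rw [mul_assoc, ← wordProd_append, ← hπ, wordProd_append, inv_mul_cancel_left]
  have hδ₁len : δ₁.length = δ.length := by
    have h₁ := hw _ (mul_mem (inv_mem (cs.wordProd_mem_closure fun i hi =>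
      hωI i (hω₁.subset hi))) hp)
    have h₂ := cs.length_wordProd_le δ₁
    have h₃ := hδ₁.length_le
    rw [← hδ₁π, hδ.eq] at h₁
    omega
  rw [hδ₁.eq_of_length hδ₁len] at hπ hχ
  have hω₁π : π ω₁ = π ω := by simpa [wordProd_append] using hπ
  refine le_antisymm (cs.length_mul_le _ _) ?_
  calc ℓ (π ω) + ℓ (π δ) = ℓ (π ω₁) + δ.length := by rw [hω₁π, hδ.eq]
    _ ≤ ω₁.length + δ.length := by gcongr; exact cs.length_wordProd_le ω₁
    _ = ℓ (π ω * π δ) := by rw [← length_append, ← hχ.eq, hπ, wordProd_append]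

end Parabolic

end CoxeterSystem

theorem conj_simple_mem_pair_general {B W : Type*} [Group W] {M : CoxeterMatrix B}
    (cs : CoxeterSystem M W) (i j : B)
    (q w : W)
    (hw : w * q ∈ Subgroup.closure {cs.simple i, cs.simple j})
    (hmin : ∀ y : W, y * q ∈ Subgroup.closure {cs.simple i, cs.simple j} →
        cs.length w ≤ cs.length y)
    (u : B) (hu : q⁻¹ * cs.simple u * q ∈ Subgroup.closure {cs.simple i, cs.simple j}) :
    w * cs.simple u * w⁻¹ ∈ ({cs.simple i, cs.simple j} : Set W) := by
  rw [← Set.image_pair] at hw hmin hu ⊢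
  set P := Subgroup.closure (cs.simple '' {i, j})
  have hv : w * cs.simple u * w⁻¹ ∈ P := by
    rw [show w * cs.simple u * w⁻¹ = (w * q) * (q⁻¹ * cs.simple u * q) * (w * q)⁻¹ by group]
    exact mul_mem (mul_mem hw hu) (inv_mem hw)
  have hminP : ∀ p ∈ P, cs.length w ≤ cs.length (p * w) :=
    fun p hp => hmin _ (by rw [mul_assoc]; exact mul_mem hp hw)
  have hadd := cs.length_mul_eq_add_of_minimal hminP hv
  have hle := cs.length_mul_le w (cs.simple u)
  have hne : cs.length (w * cs.simple u * w⁻¹) ≠ 0 := by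
    rw [Ne, cs.length_eq_zero_iff, mul_inv_eq_one, mul_eq_left]
    intro h
    simpa [h] using cs.length_simple u
  rw [inv_mul_cancel_right] at hadd
  rw [cs.length_simple] at hle
  exact cs.mem_image_simple_of_mem_closure_of_length_eq_one hv (by omega)

/-- Let `s = s_i`, `t = s_j` be distinct simple reflections with
`M i j` finite, `I = {s, t}`, `q ∈ W`, and let `w` be the minimal-length element of the
coset `W_I q⁻¹` (where `x ∈ W_I q⁻¹ ↔ x * q ∈ W_I`). If `u` is a simple reflection with
`u ∈ q W_I q⁻¹`, then `w u w⁻¹ ∈ I`. -/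
theorem conj_simple_mem_pair {B W : Type*} [Group W] {M : CoxeterMatrix B}
    (cs : CoxeterSystem M W) (i j : B) (hij : i ≠ j) (hfin : M.M i j ≠ 0)
    (q w : W)
    (hw : w * q ∈ Subgroup.closure {cs.simple i, cs.simple j})
    (hmin : ∀ y : W, y * q ∈ Subgroup.closure {cs.simple i, cs.simple j} →
        cs.length w ≤ cs.length y)
    (u : B) (hu : q⁻¹ * cs.simple u * q ∈ Subgroup.closure {cs.simple i, cs.simple j}) :
    w * cs.simple u * w⁻¹ ∈ ({cs.simple i, cs.simple j} : Set W) :=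
  conj_simple_mem_pair_general cs i j q w hw hmin u hu
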